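/- arXiv:1602.04523 — 2 statements merged into one kernel-verified Lean document; each statement's English description precedes it below -/
import Mathlib

section
/- Let Π be nested and dense, let ω ∈ D([0,T],ℝ₊^d) have finite quadratic variation [ω] along Π, fix n₀ ≥ 1 and vectors λ₀, ..., λ_{m(n₀)−1} ∈ ℝ^d, and let φ(t) := Σ_{i=0}^{m(n₀)−1} λ_i 1_{(t^{n₀}_i, t^{n₀}_{i+1}]}(t) be the corresponding simple predictable process. Then the real-valued path X(t) := Σ_{i=0}^{m(n₀)−1} λ_i · (ω(t^{n₀}_{i+1} ∧ t) − ω(t^{n₀}_i ∧ t)), t ∈ [0,T] (the pathwise integral of φ against ω), has finite quadratic variation along Π and the isometry identity holds: [X](T) = Σ_{i=0}^{m(n₀)−1} tr( λ_i λ_i^T ( [ω](t^{n₀}_{i+1}) − [ω](t^{n₀}_i) ) ). -/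
/-!
On each block `(t_k, t_{k+1}]` of the coarse partition `π^{n₀}` the path `X` moves like
`λ_k · ω`. Once `πⁿ` refines `π^{n₀}`, every fine interval lies in a single block, so the
quadratic sums of `X` are the block-restricted quadratic sums of `ω` weighted by `λ_k λ_kᵀ`.
These converge to `[ω](t ∧ t_{k+1}) - [ω](t ∧ t_k)`: the only discrepancy is the fine increment
starting at a block endpoint, which vanishes by right-continuity as the mesh goes to `0`. The
jumps of `X` are `λ_k · Δω` on the same blocks, so `[X]` splits into a continuous part and its
jumps exactly as `[ω]` does.
-/

open Filter Topology Set MeasureTheory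

noncomputable section

/-- Paths with values in `ℝ^d`, restricted in practice to the time interval `[0,T]`. -/
abbrev PathD (d : ℕ) := ℝ → (Fin d → ℝ)

/-- A sequence of partitions of `[0,T]` with mesh tending to `0`. -/
structure PartitionSeq (T : ℝ) where
  m : ℕ → ℕ
  t : ℕ → ℕ → ℝ
  m_pos : ∀ n, 0 < m n
  first : ∀ n, t n 0 = 0
  last : ∀ n, t n (m n) = T
  mono : ∀ n, ∀ i < m n, t n i < t n (i + 1)
  mesh : Tendsto (fun n => ⨆ i : Fin (m n), (t n (i + 1) - t n i)) atTop (nhds 0)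

variable {d : ℕ}

/-- The path `ω` stopped at time `t` : `ω_t = ω(· ∧ t)`. -/
def stopAt (ω : PathD d) (t : ℝ) : PathD d := fun s => ω (min s t)

/-- The path `ω_{t-} = ω 1_{[0,t)} + ω(t-) 1_{[t,T]}`. -/
def stopBefore (ω : PathD d) (t : ℝ) : PathD d :=
  fun s => if s < t then ω s else Function.leftLim ω t

/-- The vertical perturbation `ω_t^e = ω_t + e 1_{[t,T]}` of the stopped path. -/
def vert (ω : PathD d) (t : ℝ) (e : Fin d → ℝ) : PathD d :=
  fun s => if t ≤ s then ω (min s t) + e else ω (min s t)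

/-- The jump `Δω(t) = ω(t) - ω(t-)`. -/
def pathJump (ω : PathD d) (t : ℝ) : Fin d → ℝ := ω t - Function.leftLim ω t

/-- The distance `d_∞` on stopped paths. -/
def dInfty (T : ℝ) (p q : ℝ × PathD d) : ℝ :=
  (⨆ u : Icc (0:ℝ) T, ‖stopAt p.2 p.1 (u : ℝ) - stopAt q.2 q.1 (u : ℝ)‖) + |p.1 - q.1|

/-- `ω` is càdlàg on `[0,T]`: right-continuous with left limits. -/
def IsCadlagOn {E : Type*} [TopologicalSpace E] (ω : ℝ → E) (T : ℝ) : Prop :=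
  (∀ s ∈ Ico (0:ℝ) T, ContinuousWithinAt ω (Ici s) s) ∧
  (∀ s ∈ Ioc (0:ℝ) T, ∃ l : E, Tendsto ω (nhdsWithin s (Iio s)) (nhds l))

/-- Left-continuity of a non-anticipative functional for the distance `d_∞`. -/
def LeftContinuousNAF (T : ℝ) (G : ℝ → PathD d → ℝ) : Prop :=
  ∀ t ∈ Icc (0:ℝ) T, ∀ ω : PathD d, IsCadlagOn ω T → ∀ ε > (0:ℝ), ∃ η > (0:ℝ),
    ∀ h ∈ Icc (0:ℝ) t, ∀ ω' : PathD d, IsCadlagOn ω' T →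
      dInfty T (t, ω) (t - h, ω') < η → |G t ω - G (t - h) ω'| < ε

/-- Joint continuity of a non-anticipative functional for the distance `d_∞`. -/
def JointContinuousNAF (T : ℝ) (G : ℝ → PathD d → ℝ) : Prop :=
  ∀ t ∈ Icc (0:ℝ) T, ∀ ω : PathD d, IsCadlagOn ω T → ∀ ε > (0:ℝ), ∃ η > (0:ℝ),
    ∀ t' ∈ Icc (0:ℝ) T, ∀ ω' : PathD d, IsCadlagOn ω' T →
      dInfty T (t, ω) (t', ω') < η → |G t ω - G t' ω'| < ε

/-- The boundedness-preserving property of a non-anticipative functional. -/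
def BoundednessPreserving (T : ℝ) (G : ℝ → PathD d → ℝ) : Prop :=
  ∀ K : Set (Fin d → ℝ), IsCompact K → ∀ t₀ ∈ Icc (0:ℝ) T, ∃ C > (0:ℝ),
    ∀ t ∈ Icc (0:ℝ) t₀, ∀ ω : PathD d, (∀ u ∈ Icc (0:ℝ) t, ω u ∈ K) → |G t ω| ≤ C

/-- The continuous linear form `e ↦ Σ_j g j * e j` on `ℝ^d`. -/
def dotCLM {d : ℕ} (g : Fin d → ℝ) : ((Fin d) → ℝ) →L[ℝ] ℝ :=
  ∑ j : Fin d, g j • ContinuousLinearMap.proj j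

/-- A non-anticipative functional of class `C^{1,2}_b`, together with its horizontal
derivative `DF`, vertical gradient `gradF` and vertical Hessian `hessF`. -/
structure C12b (T : ℝ) (d : ℕ) where
  F : ℝ → PathD d → ℝ
  DF : ℝ → PathD d → ℝ
  gradF : ℝ → PathD d → (Fin d → ℝ)
  hessF : ℝ → PathD d → Matrix (Fin d) (Fin d) ℝ
  nonanticipative : ∀ t ∈ Icc (0:ℝ) T, ∀ ω : PathD d, IsCadlagOn ω T →
    F t ω = F t (stopAt ω t)
  horiz : ∀ t ∈ Ico (0:ℝ) T, ∀ ω : PathD d, IsCadlagOn ω T →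
    Tendsto (fun h : ℝ => (F (t + h) (stopAt ω t) - F t (stopAt ω t)) / h)
      (nhdsWithin 0 (Ioi 0)) (nhds (DF t ω))
  vertDeriv : ∀ t ∈ Icc (0:ℝ) T, ∀ ω : PathD d, IsCadlagOn ω T →
    HasFDerivAt (fun e : Fin d → ℝ => F t (vert ω t e)) (dotCLM (gradF t ω)) 0
  vertDeriv2 : ∀ t ∈ Icc (0:ℝ) T, ∀ ω : PathD d, IsCadlagOn ω T → ∀ a : Fin d,
    HasFDerivAt (fun e : Fin d → ℝ => gradF t (vert ω t e) a)
      (dotCLM (fun b => hessF t ω a b)) 0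
  F_leftCont : LeftContinuousNAF T F
  gradF_leftCont : ∀ a : Fin d, LeftContinuousNAF T (fun t ω => gradF t ω a)
  hessF_leftCont : ∀ a b : Fin d, LeftContinuousNAF T (fun t ω => hessF t ω a b)
  DF_fixedTimeCont : ∀ t ∈ Icc (0:ℝ) T, ∀ ω : PathD d, IsCadlagOn ω T →
    ∀ ε > (0:ℝ), ∃ η > (0:ℝ), ∀ ω' : PathD d, IsCadlagOn ω' T →
      (⨆ u : Icc (0:ℝ) T, ‖stopAt ω t (u : ℝ) - stopAt ω' t (u : ℝ)‖) < η →
      |DF t ω - DF t ω'| < ε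
  DF_bp : BoundednessPreserving T DF
  gradF_bp : ∀ a : Fin d, BoundednessPreserving T (fun t ω => gradF t ω a)
  hessF_bp : ∀ a b : Fin d, BoundednessPreserving T (fun t ω => hessF t ω a b)

/-- The piecewise-constant approximation
`ωⁿ = Σ_i ω(tⁿ_{i+1}-) 1_{[tⁿ_i, tⁿ_{i+1})} + ω(T) 1_{{T}}` of `ω` along the `n`-th partition. -/
def pcApprox (T : ℝ) (P : PartitionSeq T) (ω : PathD d) (n : ℕ) : PathD d :=
  fun s =>
    if h : ∃ i, i < P.m n ∧ P.t n i ≤ s ∧ s < P.t n (i + 1) then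
      Function.leftLim ω (P.t n (h.choose + 1))
    else ω T

/-- The path `(ωⁿ_{tⁿ_i -})^e`: equal to `ωⁿ` on `[0, tⁿ_i)` and to `ω(tⁿ_i -) + e`
on `[tⁿ_i, T]`. -/
def pcVert (T : ℝ) (P : PartitionSeq T) (ω : PathD d) (n i : ℕ) (e : Fin d → ℝ) : PathD d :=
  fun s => if s < P.t n i then pcApprox T P ω n s else Function.leftLim ω (P.t n i) + e

end

theorem Finset.sum_ite_mem_of_pairwiseDisjoint {ι α M : Type*} [AddCommMonoid M]
    {I : Finset ι} {B : ι → Set α} (hB : (I : Set ι).PairwiseDisjoint B) {i₀ : ι}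
    (hi₀ : i₀ ∈ I) {x : α} (hx : x ∈ B i₀) [∀ i, Decidable (x ∈ B i)] (h : ι → M) :
    ∑ i ∈ I, (if x ∈ B i then h i else 0) = h i₀ := by
  rw [Finset.sum_eq_single_of_mem i₀ hi₀ fun i hi hne => if_neg fun hxi =>
    Set.disjoint_left.1 (hB hi hi₀ hne) hxi hx, if_pos hx]

theorem sq_sum_mul {ι R : Type*} [Fintype ι] [CommSemiring R] (l v : ι → R) :
    (∑ a, l a * v a) ^ 2 = ∑ a, ∑ b, l a * l b * (v a * v b) := by
  rw [sq, Finset.sum_mul_sum]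
  exact Finset.sum_congr rfl fun a _ => Finset.sum_congr rfl fun b _ => by ring

theorem hasSum_indicator_Ioc {F : ℝ → ℝ} {t u v : ℝ} (huv : u ≤ v)
    (hF : Summable fun s : Ioc (0:ℝ) t => F s) :
    HasSum (fun s : Ioc (0:ℝ) t => (Ioc u v).indicator F s)
      ((∑' s : Ioc (0:ℝ) (min t v), F s) - ∑' s : Ioc (0:ℝ) (min t u), F s) := by
  have hsum : ∀ c ≤ t, HasSum ((Ioc 0 c).indicator F) (∑' s : Ioc (0:ℝ) c, F s) := by
    intro c hc
    have : (Ioc 0 c).indicator F = (Ioc 0 c).indicator ((Ioc 0 t).indicator F) := by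
      rw [indicator_indicator, inter_eq_left.2 (Ioc_subset_Ioc_right hc)]
    rw [tsum_subtype, this]
    exact ((summable_subtype_iff_indicator.1 hF).indicator _).hasSum
  have hset : Ioc 0 t ∩ Ioc u v = Ioc 0 (min t v) \ Ioc 0 (min t u) := by
    ext x
    simp only [mem_inter_iff, mem_Ioc, Set.mem_sdiff, le_min_iff, not_and, not_le]
    constructor
    · rintro ⟨⟨hx0, hxt⟩, hux, hxv⟩
      exact ⟨⟨hx0, hxt, hxv⟩, fun _ _ => hux⟩
    · rintro ⟨⟨hx0, hxt, hxv⟩, h⟩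
      exact ⟨⟨hx0, hxt⟩, h hx0 hxt, hxv⟩
  rw [← Function.comp_def, hasSum_subtype_iff_indicator, indicator_indicator, hset,
    indicator_sdiff (Ioc_subset_Ioc_right (min_le_min_left _ huv))]
  exact (hsum _ (min_le_left _ _)).sub (hsum _ (min_le_left _ _))

namespace PartitionSeq

variable {T : ℝ} (P : PartitionSeq T)

theorem strictMonoOn_t (n : ℕ) : StrictMonoOn (P.t n) (Iic (P.m n)) :=
  strictMonoOn_Iic_of_lt_succ fun i hi => by simpa using P.mono n i hi

variable {P}

theorem t_lt_t {n i j : ℕ} (hij : i < j) (hj : j ≤ P.m n) : P.t n i < P.t n j :=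
  P.strictMonoOn_t n (hij.le.trans hj) hj hij

theorem t_le_t {n i j : ℕ} (hij : i ≤ j) (hj : j ≤ P.m n) : P.t n i ≤ P.t n j :=
  (P.strictMonoOn_t n).monotoneOn (hij.trans hj) hj hij

theorem t_mem_Icc {n i : ℕ} (hi : i ≤ P.m n) : P.t n i ∈ Icc 0 T :=
  ⟨(P.first n).symm.trans_le (t_le_t (Nat.zero_le i) hi),
    (t_le_t hi le_rfl).trans_eq (P.last n)⟩

theorem min_t_mem_Icc {t : ℝ} (ht : t ∈ Icc 0 T) {n k : ℕ} (hk : k ≤ P.m n) :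
    min t (P.t n k) ∈ Icc 0 T :=
  ⟨le_min ht.1 (t_mem_Icc hk).1, (min_le_left _ _).trans ht.2⟩

theorem t_lt_T {n i : ℕ} (hi : i < P.m n) : P.t n i < T :=
  (t_lt_t hi le_rfl).trans_eq (P.last n)

theorem sub_le_mesh {n i : ℕ} (hi : i < P.m n) :
    P.t n (i + 1) - P.t n i ≤ ⨆ j : Fin (P.m n), (P.t n (j + 1) - P.t n j) :=
  le_ciSup (f := fun j : Fin (P.m n) => P.t n (j + 1) - P.t n j) (finite_range _).bddAbove
    ⟨i, hi⟩

theorem exists_mem_Ioc (n : ℕ) {s : ℝ} (hs : s ∈ Ioc 0 T) :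
    ∃ k < P.m n, s ∈ Ioc (P.t n k) (P.t n (k + 1)) := by
  have hex : ∃ j, j ≤ P.m n ∧ s ≤ P.t n j :=
    ⟨P.m n, le_rfl, hs.2.trans_eq (P.last n).symm⟩
  obtain ⟨hjm, hsj⟩ := Nat.find_spec hex
  have hpos : Nat.find hex ≠ 0 := fun h0 => by
    rw [h0, P.first] at hsj
    exact hsj.not_gt hs.1
  obtain ⟨k, hk⟩ := Nat.exists_eq_succ_of_ne_zero hpos
  rw [hk] at hjm hsj
  exact ⟨k, hjm, not_le.1 fun h => Nat.find_min hex (by omega) ⟨by omega, h⟩, hsj⟩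

theorem pairwiseDisjoint_Ico (n : ℕ) :
    (Finset.range (P.m n) : Set ℕ).PairwiseDisjoint fun k => Ico (P.t n k) (P.t n (k + 1)) := by
  intro k hk k' hk' hne
  simp only [Finset.coe_range, mem_Iio] at hk hk'
  rcases hne.lt_or_gt with h | h
  · exact Ico_disjoint_Ico.2 ((min_le_left _ _).trans ((t_le_t h hk'.le).trans (le_max_right _ _)))
  · exact Ico_disjoint_Ico.2 ((min_le_right _ _).trans ((t_le_t h hk.le).trans (le_max_left _ _)))

theorem pairwiseDisjoint_Ioc (n : ℕ) :
    (Finset.range (P.m n) : Set ℕ).PairwiseDisjoint fun k => Ioc (P.t n k) (P.t n (k + 1)) := by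
  intro k hk k' hk' hne
  simp only [Finset.coe_range, mem_Iio] at hk hk'
  rcases hne.lt_or_gt with h | h
  · exact Ioc_disjoint_Ioc.2 ((min_le_left _ _).trans ((t_le_t h hk'.le).trans (le_max_right _ _)))
  · exact Ioc_disjoint_Ioc.2 ((min_le_right _ _).trans ((t_le_t h hk.le).trans (le_max_left _ _)))

def IsNested (P : PartitionSeq T) : Prop :=
  ∀ n : ℕ, ∀ i ≤ P.m n, ∃ j ≤ P.m (n + 1), P.t (n + 1) j = P.t n i

theorem IsNested.exists_t_eq (hP : P.IsNested) {n₀ n : ℕ} (hn : n₀ ≤ n) {k : ℕ}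
    (hk : k ≤ P.m n₀) : ∃ j ≤ P.m n, P.t n j = P.t n₀ k := by
  induction n, hn using Nat.le_induction with
  | base => exact ⟨k, hk, rfl⟩
  | succ n _ ih =>
    obtain ⟨j, hj, hje⟩ := ih
    obtain ⟨j', hj', hj'e⟩ := hP n j hj
    exact ⟨j', hj', hj'e.trans hje⟩

theorem IsNested.exists_block (hP : P.IsNested) {n₀ n : ℕ} (hn : n₀ ≤ n) {i : ℕ}
    (hi : i < P.m n) :
    ∃ k < P.m n₀, P.t n₀ k ≤ P.t n i ∧ P.t n (i + 1) ≤ P.t n₀ (k + 1) := by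
  have hi' : P.t n (i + 1) ∈ Ioc 0 T :=
    ⟨(P.first n).symm.trans_lt (t_lt_t i.succ_pos hi), (t_mem_Icc hi).2⟩
  obtain ⟨k, hk, hlt, hle⟩ := exists_mem_Ioc n₀ hi'
  obtain ⟨j, hj, hje⟩ := hP.exists_t_eq hn hk.le
  refine ⟨k, hk, ?_, hle⟩
  -- `t_k` is a node of `πⁿ` below `tⁿ_{i+1}`, hence at most `tⁿ_i`
  rw [← hje] at hlt ⊢
  exact t_le_t (Nat.lt_succ_iff.1 (((P.strictMonoOn_t n).lt_iff_lt hj hi).1 hlt)) hi.le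

variable (P) in
open Classical in
/-- With `s = Iic t`, these are the sums approximating the quadratic covariation `[f, g](t)`. -/
noncomputable def covSum (n : ℕ) (f g : ℝ → ℝ) (s : Set ℝ) : ℝ :=
  ∑ i ∈ Finset.range (P.m n) with P.t n i ∈ s,
    (f (P.t n (i + 1)) - f (P.t n i)) * (g (P.t n (i + 1)) - g (P.t n i))

theorem covSum_eq_sum_ite (n : ℕ) (f g : ℝ → ℝ) (s : Set ℝ) [DecidablePred (· ∈ s)] :
    P.covSum n f g s = ∑ i ∈ Finset.range (P.m n), if P.t n i ∈ s then
      (f (P.t n (i + 1)) - f (P.t n i)) * (g (P.t n (i + 1)) - g (P.t n i)) else 0 := by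
  rw [covSum, Finset.sum_filter]
  congr!

theorem covSum_Iic (n : ℕ) (f g : ℝ → ℝ) (t : ℝ) :
    P.covSum n f g (Iic t) = ∑ i ∈ Finset.range (P.m n), if P.t n i ≤ t then
      (f (P.t n (i + 1)) - f (P.t n i)) * (g (P.t n (i + 1)) - g (P.t n i)) else 0 := by
  simp only [covSum_eq_sum_ite, mem_Iic]

theorem covSum_sdiff (n : ℕ) (f g : ℝ → ℝ) {s s' : Set ℝ} (h : s' ⊆ s) :
    P.covSum n f g (s \ s') = P.covSum n f g s - P.covSum n f g s' := by
  classical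
  simp only [covSum_eq_sum_ite, ← Finset.sum_sub_distrib]
  refine Finset.sum_congr rfl fun i _ => ?_
  by_cases hs' : P.t n i ∈ s'
  · simp [hs', h hs']
  · by_cases hs : P.t n i ∈ s <;> simp [hs, hs']

theorem norm_covSum_singleton_le {n : ℕ} {f g : ℝ → ℝ} {w ε : ℝ} (hε : 0 ≤ ε)
    (h : ∀ i < P.m n, P.t n i = w →
      ‖(f (P.t n (i + 1)) - f w) * (g (P.t n (i + 1)) - g w)‖ ≤ ε) :
    ‖P.covSum n f g {w}‖ ≤ ε := by
  classical
  set I := (Finset.range (P.m n)).filter fun i => P.t n i ∈ ({w} : Set ℝ)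
  have hI : ∀ i ∈ I, i < P.m n ∧ P.t n i = w := fun i hi => by
    simpa only [I, Finset.mem_filter, Finset.mem_range, mem_singleton_iff] using hi
  have hcard : I.card ≤ 1 := Finset.card_le_one.2 fun i hi j hj =>
    (P.strictMonoOn_t n).injOn (hI i hi).1.le (hI j hj).1.le ((hI i hi).2.trans (hI j hj).2.symm)
  calc ‖P.covSum n f g {w}‖ ≤ I.card • ε :=
        (norm_sum_le _ _).trans (Finset.sum_le_card_nsmul _ _ _ fun i hi => by
          simpa only [(hI i hi).2] using h i (hI i hi).1 (hI i hi).2)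
    _ ≤ ε := by
        rw [nsmul_eq_mul]
        exact mul_le_of_le_one_left hε (by exact_mod_cast hcard)

theorem tendsto_covSum_singleton {f g : ℝ → ℝ}
    (hf : ∀ s ∈ Ico 0 T, ContinuousWithinAt f (Ici s) s)
    (hg : ∀ s ∈ Ico 0 T, ContinuousWithinAt g (Ici s) s) (w : ℝ) :
    Tendsto (fun n => P.covSum n f g {w}) atTop (𝓝 0) := by
  rw [Metric.tendsto_atTop]
  intro ε hε
  simp only [dist_zero_right]
  by_cases hw : w ∈ Ico 0 T
  · have hcont : ContinuousWithinAt (fun s => (f s - f w) * (g s - g w)) (Ici w) w :=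
      ((hf w hw).sub continuousWithinAt_const).mul ((hg w hw).sub continuousWithinAt_const)
    obtain ⟨δ, hδ, hhδ⟩ := Metric.continuousWithinAt_iff.1 hcont (ε / 2) (half_pos hε)
    obtain ⟨N, hN⟩ := eventually_atTop.1 (P.mesh.eventually (gt_mem_nhds hδ))
    refine ⟨N, fun n hn =>
      (norm_covSum_singleton_le (half_pos hε).le fun i hi hiw => ?_).trans_lt (half_lt_self hε)⟩
    have hwi : w ≤ P.t n (i + 1) := hiw ▸ (t_lt_t i.lt_succ_self hi).le
    have hdist : dist (P.t n (i + 1)) w < δ := by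
      rw [Real.dist_eq, abs_of_nonneg (sub_nonneg.2 hwi), ← hiw]
      exact (sub_le_mesh hi).trans_lt (hN n hn)
    simpa using (hhδ hwi hdist).le
  · exact ⟨0, fun n _ => (norm_covSum_singleton_le le_rfl fun i hi hiw =>
      absurd (hiw ▸ ⟨(t_mem_Icc hi.le).1, t_lt_T hi⟩) hw).trans_lt hε⟩

section Limits

variable {f g q : ℝ → ℝ}
  (hf : ∀ s ∈ Ico 0 T, ContinuousWithinAt f (Ici s) s)
  (hg : ∀ s ∈ Ico 0 T, ContinuousWithinAt g (Ici s) s)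
  (hq : ∀ t ∈ Icc 0 T, Tendsto (fun n => P.covSum n f g (Iic t)) atTop (𝓝 (q t)))
include hf hg hq

theorem tendsto_covSum_Iio {v : ℝ} (hv : v ∈ Icc 0 T) :
    Tendsto (fun n => P.covSum n f g (Iio v)) atTop (𝓝 (q v)) := by
  simp_rw [← Iic_sdiff_right, covSum_sdiff _ _ _ (singleton_subset_iff.2 (mem_Iic.2 le_rfl))]
  simpa using (hq v hv).sub (tendsto_covSum_singleton hf hg v)

theorem tendsto_covSum_Iio_inter_Iic {v t : ℝ} (hv : v ∈ Icc 0 T) (ht : t ∈ Icc 0 T) :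
    Tendsto (fun n => P.covSum n f g (Iio v ∩ Iic t)) atTop (𝓝 (q (min t v))) := by
  rcases lt_or_ge t v with htv | hvt
  · rw [inter_eq_right.2 (Iic_subset_Iio.2 htv), min_eq_left htv.le]
    exact hq t ht
  · rw [inter_eq_left.2 (Iio_subset_Iic_self.trans (Iic_subset_Iic.2 hvt)), min_eq_right hvt]
    exact tendsto_covSum_Iio hf hg hq hv

theorem tendsto_covSum_Ico_inter_Iic {u v t : ℝ} (hu : u ∈ Icc 0 T) (hv : v ∈ Icc 0 T)
    (huv : u ≤ v) (ht : t ∈ Icc 0 T) :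
    Tendsto (fun n => P.covSum n f g (Ico u v ∩ Iic t)) atTop
      (𝓝 (q (min t v) - q (min t u))) := by
  rw [← Iio_sdiff_Iio, inter_sdiff_distrib_right]
  simp_rw [covSum_sdiff _ _ _ (inter_subset_inter_left _ (Iio_subset_Iio huv))]
  exact (tendsto_covSum_Iio_inter_Iic hf hg hq hv ht).sub
    (tendsto_covSum_Iio_inter_Iic hf hg hq hu ht)

end Limits

end PartitionSeq

section SimpleIntegral

variable {T : ℝ} {d : ℕ} (P : PartitionSeq T) (n₀ : ℕ) (lam : ℕ → Fin d → ℝ)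

def simpleIntegral (ω : PathD d) (t : ℝ) : ℝ :=
  ∑ i ∈ Finset.range (P.m n₀),
    ∑ a : Fin d, lam i a * (ω (min (P.t n₀ (i + 1)) t) a - ω (min (P.t n₀ i) t) a)

/-- `∫₀ᵗ φᵀ dM φ` for the simple process `φ = Σ_k λ_k 1_{(t_k, t_{k+1}]}` built on `π^{n₀}`. -/
def simpleQuadIntegral (M : ℝ → Matrix (Fin d) (Fin d) ℝ) (t : ℝ) : ℝ :=
  ∑ k ∈ Finset.range (P.m n₀), ∑ a, ∑ b,
    lam k a * lam k b * (M (min t (P.t n₀ (k + 1))) a b - M (min t (P.t n₀ k)) a b)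

variable {P n₀ lam}

open PartitionSeq

theorem simpleIntegral_sub (ω : PathD d) {k : ℕ} (hk : k < P.m n₀) {u v : ℝ}
    (hu : P.t n₀ k ≤ u) (huv : u ≤ v) (hv : v ≤ P.t n₀ (k + 1)) :
    simpleIntegral P n₀ lam ω v - simpleIntegral P n₀ lam ω u =
      ∑ a, lam k a * (ω v a - ω u a) := by
  simp only [simpleIntegral, ← Finset.sum_sub_distrib]
  rw [Finset.sum_eq_single_of_mem k (Finset.mem_range.2 hk)]
  · rw [min_eq_right hv, min_eq_right (huv.trans hv), min_eq_left (hu.trans huv), min_eq_left hu]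
    exact Finset.sum_congr rfl fun a _ => by ring
  · intro i hi hik
    rw [Finset.mem_range] at hi
    rcases hik.lt_or_gt with h | h
    · have h₁ : P.t n₀ (i + 1) ≤ u := (t_le_t h hk.le).trans hu
      have h₀ : P.t n₀ i ≤ u := (t_le_t i.le_succ hi).trans h₁
      simp [h₀, h₁, h₀.trans huv, h₁.trans huv]
    · have h₀ : v ≤ P.t n₀ i := hv.trans (t_le_t h hi.le)
      have h₁ : v ≤ P.t n₀ (i + 1) := h₀.trans (t_le_t i.le_succ hi)
      simp [h₀, h₁, huv.trans h₀, huv.trans h₁]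

theorem covSum_simpleIntegral (hP : P.IsNested) {n : ℕ} (hn : n₀ ≤ n) (ω : PathD d)
    (s : Set ℝ) :
    P.covSum n (simpleIntegral P n₀ lam ω) (simpleIntegral P n₀ lam ω) s =
      ∑ k ∈ Finset.range (P.m n₀), ∑ a, ∑ b, lam k a * lam k b *
        P.covSum n (ω · a) (ω · b) (Ico (P.t n₀ k) (P.t n₀ (k + 1)) ∩ s) := by
  classical
  have hsq : ∀ i < P.m n,
      (simpleIntegral P n₀ lam ω (P.t n (i + 1)) - simpleIntegral P n₀ lam ω (P.t n i)) *
        (simpleIntegral P n₀ lam ω (P.t n (i + 1)) - simpleIntegral P n₀ lam ω (P.t n i)) =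
      ∑ k ∈ Finset.range (P.m n₀), if P.t n i ∈ Ico (P.t n₀ k) (P.t n₀ (k + 1)) then
        ∑ a, ∑ b, lam k a * lam k b * ((ω (P.t n (i + 1)) a - ω (P.t n i) a) *
          (ω (P.t n (i + 1)) b - ω (P.t n i) b)) else 0 := by
    intro i hi
    obtain ⟨k, hk, hki, hik⟩ := hP.exists_block hn hi
    have hlt : P.t n i < P.t n (i + 1) := P.mono n i hi
    rw [Finset.sum_ite_mem_of_pairwiseDisjoint (P.pairwiseDisjoint_Ico n₀)
      (Finset.mem_range.2 hk) ⟨hki, hlt.trans_le hik⟩, ← sq,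
      simpleIntegral_sub ω hk hki hlt.le hik, sq_sum_mul]
  simp only [covSum_eq_sum_ite, Finset.mul_sum]
  calc _ = ∑ i ∈ Finset.range (P.m n), ∑ k ∈ Finset.range (P.m n₀), ∑ a, ∑ b,
        lam k a * lam k b * if P.t n i ∈ Ico (P.t n₀ k) (P.t n₀ (k + 1)) ∩ s then
          (ω (P.t n (i + 1)) a - ω (P.t n i) a) * (ω (P.t n (i + 1)) b - ω (P.t n i) b)
        else 0 := by
        refine Finset.sum_congr rfl fun i hi => ?_
        rw [hsq i (Finset.mem_range.1 hi)]
        by_cases his : P.t n i ∈ s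
        · rw [if_pos his]
          refine Finset.sum_congr rfl fun k _ => ?_
          by_cases hik : P.t n i ∈ Ico (P.t n₀ k) (P.t n₀ (k + 1)) <;> simp [his, hik]
        · simp [his]
    _ = _ := by
        rw [Finset.sum_comm]
        refine Finset.sum_congr rfl fun k _ => ?_
        rw [Finset.sum_comm]
        exact Finset.sum_congr rfl fun a _ => Finset.sum_comm

theorem tendsto_covSum_simpleIntegral (hP : P.IsNested) {ω : PathD d}
    (hω : ∀ s ∈ Ico 0 T, ContinuousWithinAt ω (Ici s) s)
    {Q : ℝ → Matrix (Fin d) (Fin d) ℝ} (hQ : ∀ t ∈ Icc 0 T, ∀ a b,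
      Tendsto (fun n => P.covSum n (ω · a) (ω · b) (Iic t)) atTop (𝓝 (Q t a b)))
    {t : ℝ} (ht : t ∈ Icc 0 T) :
    Tendsto (fun n =>
        P.covSum n (simpleIntegral P n₀ lam ω) (simpleIntegral P n₀ lam ω) (Iic t)) atTop
      (𝓝 (simpleQuadIntegral P n₀ lam Q t)) := by
  have hωa : ∀ a, ∀ s ∈ Ico 0 T, ContinuousWithinAt (ω · a) (Ici s) s := fun a s hs =>
    (continuous_apply a).continuousAt.comp_continuousWithinAt (hω s hs)
  have hblock : ∀ k ∈ Finset.range (P.m n₀), ∀ a b, Tendsto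
      (fun n => P.covSum n (ω · a) (ω · b) (Ico (P.t n₀ k) (P.t n₀ (k + 1)) ∩ Iic t)) atTop
      (𝓝 (Q (min t (P.t n₀ (k + 1))) a b - Q (min t (P.t n₀ k)) a b)) := fun k hk a b => by
    rw [Finset.mem_range] at hk
    exact tendsto_covSum_Ico_inter_Iic (hωa a) (hωa b) (fun t ht => hQ t ht a b)
      (t_mem_Icc hk.le) (t_mem_Icc hk) (t_le_t k.le_succ hk) ht
  refine (tendsto_finsetSum _ fun k hk => tendsto_finsetSum _ fun a _ =>
    tendsto_finsetSum _ fun b _ => (hblock k hk a b).const_mul _).congr' ?_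
  filter_upwards [eventually_ge_atTop n₀] with n hn
  exact (covSum_simpleIntegral hP hn ω _).symm

theorem simpleIntegral_sub_leftLim (ω : PathD d) {k : ℕ} (hk : k < P.m n₀) {s : ℝ}
    (hs : s ∈ Ioc (P.t n₀ k) (P.t n₀ (k + 1))) {l : Fin d → ℝ}
    (hl : Tendsto ω (𝓝[<] s) (𝓝 l)) :
    simpleIntegral P n₀ lam ω s - Function.leftLim (simpleIntegral P n₀ lam ω) s =
      ∑ a, lam k a * pathJump ω s a := by
  set X := simpleIntegral P n₀ lam ω
  have hX : Tendsto X (𝓝[<] s) (𝓝 (X s - ∑ a, lam k a * (ω s a - l a))) := by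
    refine (tendsto_const_nhds.sub (tendsto_finsetSum _ fun a _ =>
      (tendsto_const_nhds.sub (((continuous_apply a).tendsto l).comp hl)).const_mul _)).congr' ?_
    filter_upwards [Ioo_mem_nhdsLT hs.1] with s' hs'
    simp only [Function.comp_apply]
    rw [← simpleIntegral_sub ω hk hs'.1.le hs'.2.le hs.2]
    ring
  rw [leftLim_eq_of_tendsto hX, pathJump, leftLim_eq_of_tendsto hl]
  simp

noncomputable def jumpQuadVar (ω : PathD d) (t : ℝ) : Matrix (Fin d) (Fin d) ℝ :=
  Matrix.of fun a b => ∑' s : Ioc (0:ℝ) t, pathJump ω s a * pathJump ω s b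

theorem hasSum_sq_sub_leftLim_simpleIntegral {ω : PathD d}
    (hω : ∀ s ∈ Ioc 0 T, ∃ l, Tendsto ω (𝓝[<] s) (𝓝 l)) {t : ℝ} (ht : t ≤ T)
    (hsum : ∀ a b, Summable fun s : Ioc (0:ℝ) t => pathJump ω s a * pathJump ω s b) :
    HasSum (fun s : Ioc (0:ℝ) t =>
        (simpleIntegral P n₀ lam ω s - Function.leftLim (simpleIntegral P n₀ lam ω) s) ^ 2)
      (simpleQuadIntegral P n₀ lam (jumpQuadVar ω) t) := by
  have hpt : ∀ s : Ioc (0:ℝ) t,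
      (simpleIntegral P n₀ lam ω s - Function.leftLim (simpleIntegral P n₀ lam ω) s) ^ 2 =
        ∑ k ∈ Finset.range (P.m n₀), ∑ a, ∑ b, lam k a * lam k b *
          (Ioc (P.t n₀ k) (P.t n₀ (k + 1))).indicator
            (fun s => pathJump ω s a * pathJump ω s b) s := by
    rintro ⟨s, hs⟩
    have hsT : s ∈ Ioc 0 T := ⟨hs.1, hs.2.trans ht⟩
    obtain ⟨k, hk, hks⟩ := P.exists_mem_Ioc n₀ hsT
    obtain ⟨l, hl⟩ := hω s hsT
    rw [simpleIntegral_sub_leftLim ω hk hks hl, sq_sum_mul,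
      ← Finset.sum_ite_mem_of_pairwiseDisjoint (P.pairwiseDisjoint_Ioc n₀)
        (Finset.mem_range.2 hk) hks
      (fun k => ∑ a, ∑ b, lam k a * lam k b * (pathJump ω s a * pathJump ω s b))]
    refine Finset.sum_congr rfl fun k _ => ?_
    by_cases hsk : s ∈ Ioc (P.t n₀ k) (P.t n₀ (k + 1)) <;> simp [hsk]
  simp_rw [hpt]
  exact hasSum_sum fun k hk => hasSum_sum fun a _ => hasSum_sum fun b _ =>
    (hasSum_indicator_Ioc (t_le_t k.le_succ (Finset.mem_range.1 hk)) (hsum a b)).mul_left _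

theorem simpleQuadIntegral_eq_add {M N K : ℝ → Matrix (Fin d) (Fin d) ℝ}
    (h : ∀ s ∈ Icc 0 T, ∀ a b, M s a b = N s a b + K s a b) {t : ℝ} (ht : t ∈ Icc 0 T) :
    simpleQuadIntegral P n₀ lam M t =
      simpleQuadIntegral P n₀ lam N t + simpleQuadIntegral P n₀ lam K t := by
  simp only [simpleQuadIntegral, ← Finset.sum_add_distrib]
  refine Finset.sum_congr rfl fun k hk => Finset.sum_congr rfl fun a _ =>
    Finset.sum_congr rfl fun b _ => ?_
  rw [h _ (min_t_mem_Icc ht (Finset.mem_range.1 hk)),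
    h _ (min_t_mem_Icc ht (Finset.mem_range.1 hk).le)]
  ring

theorem continuousOn_simpleQuadIntegral {M : ℝ → Matrix (Fin d) (Fin d) ℝ}
    (hM : ∀ a b, ContinuousOn (fun t => M t a b) (Icc 0 T)) :
    ContinuousOn (simpleQuadIntegral P n₀ lam M) (Icc 0 T) := by
  have hmin : ∀ k ≤ P.m n₀, ∀ a b,
      ContinuousOn (fun t => M (min t (P.t n₀ k)) a b) (Icc 0 T) := fun k hk a b =>
    (hM a b).comp (continuous_id.min continuous_const).continuousOn fun t ht => min_t_mem_Icc ht hk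
  exact continuousOn_finsetSum _ fun k hk => continuousOn_finsetSum _ fun a _ =>
    continuousOn_finsetSum _ fun b _ => continuousOn_const.mul
      ((hmin _ (Finset.mem_range.1 hk) a b).sub (hmin _ (Finset.mem_range.1 hk).le a b))

theorem simpleQuadIntegral_T (M : ℝ → Matrix (Fin d) (Fin d) ℝ) :
    simpleQuadIntegral P n₀ lam M T = ∑ k ∈ Finset.range (P.m n₀), ∑ a, ∑ b,
      lam k a * lam k b * (M (P.t n₀ (k + 1)) a b - M (P.t n₀ k) a b) := by
  refine Finset.sum_congr rfl fun k hk => ?_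
  rw [min_eq_right (t_mem_Icc (Finset.mem_range.1 hk)).2,
    min_eq_right (t_mem_Icc (Finset.mem_range.1 hk).le).2]

end SimpleIntegral

open Filter Topology Set MeasureTheory in
theorem pathwise_isometry_simple_general
    (T : ℝ) (d : ℕ) (P : PartitionSeq T)
    (hnested : ∀ n : ℕ, ∀ i ≤ P.m n, ∃ j ≤ P.m (n + 1), P.t (n + 1) j = P.t n i)
    (ω : PathD d) (hω : IsCadlagOn ω T)
    -- finite quadratic variation of `ω` along `P`, with continuous part `Qc`
    (Q Qc : ℝ → Matrix (Fin d) (Fin d) ℝ)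
    (hQ : ∀ t ∈ Icc (0:ℝ) T, ∀ a b : Fin d,
      Tendsto (fun n => ∑ i ∈ Finset.range (P.m n),
        if P.t n i ≤ t then
          (ω (P.t n (i + 1)) a - ω (P.t n i) a) * (ω (P.t n (i + 1)) b - ω (P.t n i) b)
        else 0) atTop (nhds (Q t a b)))
    (hQc_cont : ∀ a b : Fin d, ContinuousOn (fun t => Qc t a b) (Icc 0 T))
    (hjump_summable : ∀ t ∈ Icc (0:ℝ) T, ∀ a b : Fin d,
      Summable (fun s : Ioc (0:ℝ) t => pathJump ω s.1 a * pathJump ω s.1 b))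
    (hdecomp : ∀ t ∈ Icc (0:ℝ) T, ∀ a b : Fin d,
      Q t a b = Qc t a b + ∑' s : Ioc (0:ℝ) t, pathJump ω s.1 a * pathJump ω s.1 b)
    -- the simple predictable integrand
    (n₀ : ℕ) (lam : ℕ → (Fin d → ℝ)) :
    -- `X` is the pathwise integral of `φ` against `ω`
    ∀ X : ℝ → ℝ,
      (∀ t : ℝ, X t = ∑ i ∈ Finset.range (P.m n₀),
        ∑ a : Fin d, lam i a * (ω (min (P.t n₀ (i + 1)) t) a - ω (min (P.t n₀ i) t) a)) →
      ∃ QX : ℝ → ℝ,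
        -- `X` has finite quadratic variation along `P` ...
        (∀ t ∈ Icc (0:ℝ) T,
          Tendsto (fun n => ∑ i ∈ Finset.range (P.m n),
            if P.t n i ≤ t then (X (P.t n (i + 1)) - X (P.t n i))^2 else 0)
            atTop (nhds (QX t))) ∧
        (∃ QXc : ℝ → ℝ, ContinuousOn QXc (Icc 0 T) ∧
          ∀ t ∈ Icc (0:ℝ) T,
            Summable (fun s : Ioc (0:ℝ) t => (X s.1 - Function.leftLim X s.1)^2) ∧
            QX t = QXc t + ∑' s : Ioc (0:ℝ) t, (X s.1 - Function.leftLim X s.1)^2) ∧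
        -- ... and the isometry identity holds
        QX T = ∑ i ∈ Finset.range (P.m n₀),
          ∑ a : Fin d, ∑ b : Fin d,
            lam i a * lam i b * (Q (P.t n₀ (i + 1)) a b - Q (P.t n₀ i) a b) := by
  intro X hX
  obtain rfl : X = simpleIntegral P n₀ lam ω := funext hX
  have hQ' : ∀ t ∈ Icc 0 T, ∀ a b,
      Tendsto (fun n => P.covSum n (ω · a) (ω · b) (Iic t)) atTop (𝓝 (Q t a b)) :=
    fun t ht a b => by simpa only [PartitionSeq.covSum_Iic] using hQ t ht a b
  refine ⟨simpleQuadIntegral P n₀ lam Q, fun t ht => ?_, ⟨simpleQuadIntegral P n₀ lam Qc,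
    continuousOn_simpleQuadIntegral hQc_cont, fun t ht => ?_⟩, simpleQuadIntegral_T Q⟩
  · simpa only [PartitionSeq.covSum_Iic, sq] using
      tendsto_covSum_simpleIntegral hnested hω.1 hQ' ht
  · have hJ := hasSum_sq_sub_leftLim_simpleIntegral (P := P) (n₀ := n₀) (lam := lam) hω.2 ht.2
      (hjump_summable t ht)
    exact ⟨hJ.summable, by rw [hJ.tsum_eq]; exact simpleQuadIntegral_eq_add hdecomp ht⟩

open Filter Topology Set MeasureTheory in
/-- **Pathwise isometry for simple integrands.**  Let `Π` be nested and dense, `ω` a càdlàg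
positive path with finite quadratic variation `Q` along `Π` (with continuous part `Qc`),
and `φ = Σ_i λ_i 1_{(t^{n₀}_i, t^{n₀}_{i+1}]}` a simple predictable process.  Then the
pathwise integral `X(t) = Σ_i λ_i · (ω(t^{n₀}_{i+1} ∧ t) - ω(t^{n₀}_i ∧ t))` has finite
quadratic variation along `Π` and `[X](T) = Σ_i tr(λ_i λ_iᵀ ([ω](t^{n₀}_{i+1}) - [ω](t^{n₀}_i)))`. -/
theorem pathwise_isometry_simple
    (T : ℝ) (hT : 0 < T) (d : ℕ) (P : PartitionSeq T)
    (hnested : ∀ n : ℕ, ∀ i ≤ P.m n, ∃ j ≤ P.m (n + 1), P.t (n + 1) j = P.t n i)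
    (ω : PathD d) (hω : IsCadlagOn ω T)
    (hω_pos : ∀ u ∈ Icc (0:ℝ) T, ∀ a : Fin d, 0 ≤ ω u a)
    -- finite quadratic variation of `ω` along `P`, with continuous part `Qc`
    (Q Qc : ℝ → Matrix (Fin d) (Fin d) ℝ)
    (hQ : ∀ t ∈ Icc (0:ℝ) T, ∀ a b : Fin d,
      Tendsto (fun n => ∑ i ∈ Finset.range (P.m n),
        if P.t n i ≤ t then
          (ω (P.t n (i + 1)) a - ω (P.t n i) a) * (ω (P.t n (i + 1)) b - ω (P.t n i) b)
        else 0) atTop (nhds (Q t a b)))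
    (hQc_cont : ∀ a b : Fin d, ContinuousOn (fun t => Qc t a b) (Icc 0 T))
    (hjump_summable : ∀ t ∈ Icc (0:ℝ) T, ∀ a b : Fin d,
      Summable (fun s : Ioc (0:ℝ) t => pathJump ω s.1 a * pathJump ω s.1 b))
    (hdecomp : ∀ t ∈ Icc (0:ℝ) T, ∀ a b : Fin d,
      Q t a b = Qc t a b + ∑' s : Ioc (0:ℝ) t, pathJump ω s.1 a * pathJump ω s.1 b)
    -- the simple predictable integrand
    (n₀ : ℕ) (lam : ℕ → (Fin d → ℝ)) :
    -- `X` is the pathwise integral of `φ` against `ω`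
    ∀ X : ℝ → ℝ,
      (∀ t : ℝ, X t = ∑ i ∈ Finset.range (P.m n₀),
        ∑ a : Fin d, lam i a * (ω (min (P.t n₀ (i + 1)) t) a - ω (min (P.t n₀ i) t) a)) →
      ∃ QX : ℝ → ℝ,
        -- `X` has finite quadratic variation along `P` ...
        (∀ t ∈ Icc (0:ℝ) T,
          Tendsto (fun n => ∑ i ∈ Finset.range (P.m n),
            if P.t n i ≤ t then (X (P.t n (i + 1)) - X (P.t n i))^2 else 0)
            atTop (nhds (QX t))) ∧
        (∃ QXc : ℝ → ℝ, ContinuousOn QXc (Icc 0 T) ∧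
          ∀ t ∈ Icc (0:ℝ) T,
            Summable (fun s : Ioc (0:ℝ) t => (X s.1 - Function.leftLim X s.1)^2) ∧
            QX t = QXc t + ∑' s : Ioc (0:ℝ) t, (X s.1 - Function.leftLim X s.1)^2) ∧
        -- ... and the isometry identity holds
        QX T = ∑ i ∈ Finset.range (P.m n₀),
          ∑ a : Fin d, ∑ b : Fin d,
            lam i a * lam i b * (Q (P.t n₀ (i + 1)) a b - Q (P.t n₀ i) a b) :=
  pathwise_isometry_simple_general T d P hnested ω hω Q Qc hQ hQc_cont hjump_summable hdecomp n₀ lam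
end

section
/- Let ψ : ℝ → ℂ be continuously differentiable and let t < T, x, x̄ ∈ ℝ. Define Ĝ⁰(t,x;s,ξ) := exp( i ξ x + (s−t) ψ(ξ) ) for s ∈ [t,T]. Then for every ξ ∈ ℝ, ∫_t^T e^{(T−s)ψ(ξ)} [ ( i ∂_ξ + x̄ ) ( (ξ² + iξ) Ĝ⁰(t,x;s,ξ) ) − (2iξ − 1) Ĝ⁰(t,x;s,ξ) ] ds = − Ĝ⁰(t,x;T,ξ) (T−t) (ξ² + iξ) ( x − x̄ − (i/2)(T−t) ψ′(ξ) ). Consequently, for any constant α₁ ∈ ℝ, the solution Ĝ¹(t,x;·,ξ) of the ordinary differential equation ∂_T u(T,ξ) = ψ(ξ) u(T,ξ) + α₁ [ (i∂_ξ + x̄)( (ξ²+iξ) Ĝ⁰(t,x;T,ξ) ) − (2iξ−1) Ĝ⁰(t,x;T,ξ) ] with u(t,ξ) = 0 is given by Ĝ¹(t,x;T,ξ) = − Ĝ⁰(t,x;T,ξ) α₁ (T−t) (ξ² + iξ) ( x − x̄ − (i/2)(T−t) ψ′(ξ) ). -/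
/-!
Since `Ĝ⁰(s)` is an exponential in `ξ`, the source term is `Ĝ⁰(s)` times the polynomial
`(ξ² + iξ)(x̄ - x + i(s - t)ψ'(ξ))`, and the propagator `e^{(T-s)ψ(ξ)}` carries `Ĝ⁰(s)` to `Ĝ⁰(T)`.
The Duhamel integrand is therefore affine in `s`, and integrating it gives the closed form.
The ODE is solved by the same integral (variation of constants).
-/

open Filter Topology Set MeasureTheory intervalIntegral Complex

noncomputable section

/-- The zeroth-order approximation of the characteristic function:
`Ĝ⁰(t,x;s,ξ) = exp(iξx + (s-t)ψ(ξ))`. -/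
def hatG0 (ψ : ℝ → ℂ) (t x s : ℝ) (ξ : ℝ) : ℂ :=
  Complex.exp (Complex.I * (ξ : ℂ) * (x : ℂ) + ((s - t : ℝ) : ℂ) * ψ ξ)

/-- The Fourier-space source term
`(i∂_ξ + x̄)((ξ² + iξ)Ĝ⁰(t,x;s,ξ)) - (2iξ - 1)Ĝ⁰(t,x;s,ξ)`. -/
def fourierSrc (ψ : ℝ → ℂ) (t x xbar s : ℝ) (ξ : ℝ) : ℂ :=
  (Complex.I * deriv (fun ξ' : ℝ => ((ξ' : ℂ)^2 + Complex.I * (ξ' : ℂ)) * hatG0 ψ t x s ξ') ξ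
      + (xbar : ℂ) * (((ξ : ℂ)^2 + Complex.I * (ξ : ℂ)) * hatG0 ψ t x s ξ))
    - (2 * Complex.I * (ξ : ℂ) - 1) * hatG0 ψ t x s ξ

theorem integral_const_add_ofReal_sub_mul (a b : ℝ) (A B : ℂ) :
    ∫ s in a..b, (A + ((s - a : ℝ) : ℂ) * B) =
      ((b - a : ℝ) : ℂ) * A + (((b - a) ^ 2 / 2 : ℝ) : ℂ) * B := by
  rw [intervalIntegral.integral_add (by simp) (by apply Continuous.intervalIntegrable; fun_prop),
    intervalIntegral.integral_mul_const, integral_ofReal, integral_comp_sub_right (fun s => s)]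
  simp [integral_id]

theorem eq_exp_smul_add_integral_of_hasDerivAt {E : Type*} [NormedAddCommGroup E]
    [NormedSpace ℂ E] [CompleteSpace E] {t T : ℝ} (htT : t ≤ T) (a : ℂ) {u f : ℝ → E}
    (hu : ∀ s ∈ Icc t T, HasDerivAt u (a • u s + f s) s) (hf : IntervalIntegrable f volume t T) :
    u T = exp (((T - t : ℝ) : ℂ) * a) • u t + ∫ s in t..T, exp (((T - s : ℝ) : ℂ) * a) • f s := by
  have hexp : ∀ s : ℝ, HasDerivAt (fun r : ℝ => exp (((T - r : ℝ) : ℂ) * a))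
      (exp (((T - s : ℝ) : ℂ) * a) * -a) s := by
    intro s
    simpa using (((hasDerivAt_id s).const_sub T).ofReal_comp.mul_const a).cexp
  have hw : ∀ s ∈ uIcc t T, HasDerivAt (fun r => exp (((T - r : ℝ) : ℂ) * a) • u r)
      (exp (((T - s : ℝ) : ℂ) * a) • f s) s := by
    intro s hs
    rw [uIcc_of_le htT] at hs
    convert (hexp s).smul (hu s hs) using 1
    · rfl
    · rw [smul_add, mul_smul, neg_smul, smul_neg, add_neg_cancel_comm]
  rw [integral_eq_sub_of_hasDerivAt hw (hf.continuousOn_smul (by fun_prop))]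
  simp

section hatG0

variable {ψ : ℝ → ℂ} {ψ' : ℂ} {ξ : ℝ}

theorem hasDerivAt_hatG0 (hψ : HasDerivAt ψ ψ' ξ) (t x s : ℝ) :
    HasDerivAt (fun ξ' => hatG0 ψ t x s ξ')
      ((I * x + ((s - t : ℝ) : ℂ) * ψ') * hatG0 ψ t x s ξ) ξ := by
  have hξ : HasDerivAt (fun ξ' : ℝ => (ξ' : ℂ)) 1 ξ := (hasDerivAt_id ξ).ofReal_comp
  simp only [hatG0]
  convert (((hξ.const_mul I).mul_const (x : ℂ)).fun_add (hψ.const_mul ((s - t : ℝ) : ℂ))).cexp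
    using 1
  ring

theorem fourierSrc_eq_hatG0_mul (hψ : HasDerivAt ψ ψ' ξ) (t x xbar s : ℝ) :
    fourierSrc ψ t x xbar s ξ = hatG0 ψ t x s ξ *
      (((ξ : ℂ) ^ 2 + I * ξ) * (xbar - x + I * ((s - t : ℝ) : ℂ) * ψ')) := by
  have hξ : HasDerivAt (fun ξ' : ℝ => (ξ' : ℂ)) 1 ξ := (hasDerivAt_id ξ).ofReal_comp
  have hpoly : HasDerivAt (fun ξ' : ℝ => (ξ' : ℂ) ^ 2 + I * ξ') (2 * ξ + I) ξ :=
    ((hξ.fun_pow 2).fun_add (hξ.const_mul I)).congr_deriv (by norm_num)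
  rw [fourierSrc, (hpoly.fun_mul (hasDerivAt_hatG0 hψ t x s)).deriv]
  linear_combination (hatG0 ψ t x s ξ * (1 + I * ξ * x + (ξ : ℂ) ^ 2 * x)) * I_mul_I

end hatG0

theorem exp_mul_hatG0 (ψ : ℝ → ℂ) (t x s T ξ : ℝ) :
    exp (((T - s : ℝ) : ℂ) * ψ ξ) * hatG0 ψ t x s ξ = hatG0 ψ t x T ξ := by
  rw [hatG0, hatG0, ← exp_add]
  congr 1
  push_cast
  ring

/-- **First-order term of the adjoint expansion of the characteristic function in Fourier
space**: the explicit value of the Duhamel integral, and consequently the solution of the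
associated ordinary differential equation with zero initial condition. -/
theorem fourier_first_order_term
    (T t x xbar : ℝ) (htT : t < T)
    (ψ : ℝ → ℂ) (hψ : ContDiff ℝ 1 ψ) :
    ∀ ξ : ℝ,
      -- the integral identity
      ((∫ s in t..T, Complex.exp (((T - s : ℝ) : ℂ) * ψ ξ) * fourierSrc ψ t x xbar s ξ)
        = -hatG0 ψ t x T ξ * ((T - t : ℝ) : ℂ) * ((ξ : ℂ)^2 + Complex.I * (ξ : ℂ)) *
            ((x : ℂ) - (xbar : ℂ) - (Complex.I / 2) * ((T - t : ℝ) : ℂ) * deriv ψ ξ)) ∧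
      -- consequently, the solution of the ODE
      -- `∂_T u = ψ(ξ) u + α₁ [(i∂_ξ + x̄)((ξ²+iξ)Ĝ⁰) - (2iξ-1)Ĝ⁰]`, `u(t) = 0`, is given by
      -- `Ĝ¹(t,x;T,ξ) = -Ĝ⁰(t,x;T,ξ) α₁ (T-t)(ξ²+iξ)(x - x̄ - (i/2)(T-t)ψ'(ξ))`
      (∀ α₁ : ℝ, ∀ u : ℝ → ℂ, u t = 0 →
        (∀ s ∈ Icc t T, HasDerivAt u (ψ ξ * u s + (α₁ : ℂ) * fourierSrc ψ t x xbar s ξ) s) →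
        u T = -hatG0 ψ t x T ξ * (α₁ : ℂ) * ((T - t : ℝ) : ℂ) *
            ((ξ : ℂ)^2 + Complex.I * (ξ : ℂ)) *
            ((x : ℂ) - (xbar : ℂ) - (Complex.I / 2) * ((T - t : ℝ) : ℂ) * deriv ψ ξ)) := by
  intro ξ
  have hψ' : HasDerivAt ψ (deriv ψ ξ) ξ := (hψ.differentiable one_ne_zero ξ).hasDerivAt
  set P : ℂ := (ξ : ℂ) ^ 2 + I * ξ
  have hintegrand : ∀ s : ℝ, exp (((T - s : ℝ) : ℂ) * ψ ξ) * fourierSrc ψ t x xbar s ξ =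
      hatG0 ψ t x T ξ * P * (xbar - x) +
        ((s - t : ℝ) : ℂ) * (hatG0 ψ t x T ξ * P * (I * deriv ψ ξ)) := by
    intro s
    rw [fourierSrc_eq_hatG0_mul hψ', ← mul_assoc, exp_mul_hatG0]
    ring
  have hintegral : ∫ s in t..T, exp (((T - s : ℝ) : ℂ) * ψ ξ) * fourierSrc ψ t x xbar s ξ =
      -hatG0 ψ t x T ξ * ((T - t : ℝ) : ℂ) * P *
        (x - xbar - (I / 2) * ((T - t : ℝ) : ℂ) * deriv ψ ξ) := by
    simp_rw [hintegrand, integral_const_add_ofReal_sub_mul]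
    push_cast
    ring
  refine ⟨hintegral, fun α₁ u hu0 hu => ?_⟩
  have hsrc : Continuous fun s => (α₁ : ℂ) * fourierSrc ψ t x xbar s ξ := by
    simp_rw [fourierSrc_eq_hatG0_mul hψ', hatG0]
    fun_prop
  rw [eq_exp_smul_add_integral_of_hasDerivAt htT.le (ψ ξ) hu (hsrc.intervalIntegrable t T), hu0]
  simp_rw [smul_eq_mul, mul_left_comm _ (α₁ : ℂ), intervalIntegral.integral_const_mul, hintegral]
  ring

end
end
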